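/- arXiv:2508.05809 — 3 statements merged into one kernel-verified Lean document; each statement's English description precedes it below -/
import Mathlib

section
/- Let L be an atomic 0-distributive lattice with least element 0 having at least three distinct atoms, and let t ≥ 1 be a natural number. Let H = G^c(L) ∨ K_t be the join of G^c(L) with the complete graph K_t, i.e. the simple graph on the disjoint union Z*(L) ⊕ {1,…,t} containing all edges of G^c(L), all edges between distinct elements of {1,…,t}, and all edges between the two parts. Then two distinct vertices u, v of H are mutually maximally distant in H if and only if either u, v both lie in Z*(L) and are mutually maximally distant in G^c(L), or u, v both lie in {1,…,t}. Equivalently, the strong resolving graph of H is the disjoint union of the strong resolving graph of G^c(L) and K_t: (G^c(L) ∨ K_t)_SR = (G^c(L))_SR + K_t. -/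
/-- The set of nonzero zero-divisors of a lattice `L` with least element `⊥`. -/
def ZStar (L : Type*) [Lattice L] [OrderBot L] : Type _ :=
  {a : L // a ≠ ⊥ ∧ ∃ b : L, b ≠ ⊥ ∧ a ⊓ b = ⊥}

/-- The complement of the zero-divisor graph of a lattice `L`. -/
def GcL (L : Type*) [Lattice L] [OrderBot L] : SimpleGraph (ZStar L) where
  Adj x y := x ≠ y ∧ (x.1 ⊓ y.1 ≠ ⊥)
  symm := ⟨fun x y h => ⟨h.1.symm, by rw [inf_comm]; exact h.2⟩⟩
  loopless := ⟨fun x h => h.1 rfl⟩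

/-- `u` is maximally distant from `v` in `G`. -/
def MaxDistant {V : Type*} (G : SimpleGraph V) (u v : V) : Prop :=
  ∀ w : V, G.Adj u w → G.dist w v ≤ G.dist u v

/-- `u` and `v` are mutually maximally distant in `G`. -/
def MutuallyMaxDistant {V : Type*} (G : SimpleGraph V) (u v : V) : Prop :=
  MaxDistant G u v ∧ MaxDistant G v u

/-- The strong resolving graph of `G`. -/
def srGraph {V : Type*} (G : SimpleGraph V) : SimpleGraph V where
  Adj u v := u ≠ v ∧ MutuallyMaxDistant G u v
  symm := ⟨fun u v h => ⟨h.1.symm, h.2.2, h.2.1⟩⟩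
  loopless := ⟨fun u h => h.1 rfl⟩

/-- The join `G ∨ K_t` of a graph `G` with the complete graph on `t` vertices:
all edges of `G`, all edges inside `K_t`, and all edges between the two parts. -/
def joinKt {V : Type*} (G : SimpleGraph V) (t : ℕ) : SimpleGraph (V ⊕ Fin t) where
  Adj u v :=
    match u, v with
    | .inl a, .inl b => G.Adj a b
    | .inl _, .inr _ => True
    | .inr _, .inl _ => True
    | .inr i, .inr j => i ≠ j
  symm := by
    refine ⟨?_⟩
    rintro (a | i) (b | j) h
    · exact G.adj_symm h
    · trivial
    · trivial
    · exact Ne.symm h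
  loopless := by
    refine ⟨?_⟩
    rintro (a | i) h
    · exact G.irrefl h
    · exact h rfl

/-- The disjoint union of the strong resolving graph of `G` with the complete graph `K_t`. -/
def srSum {V : Type*} (G : SimpleGraph V) (t : ℕ) : SimpleGraph (V ⊕ Fin t) where
  Adj u v :=
    match u, v with
    | .inl a, .inl b => (srGraph G).Adj a b
    | .inr i, .inr j => i ≠ j
    | _, _ => False
  symm := by
    refine ⟨?_⟩
    rintro (a | i) (b | j) h
    · exact (srGraph G).adj_symm h
    · exact h.elim
    · exact h.elim
    · exact Ne.symm h
  loopless := by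
    refine ⟨?_⟩
    rintro (a | i) h
    · exact (srGraph G).irrefl h
    · exact h rfl

/-!
In `G ∨ K_t` (with `t ≥ 1`) every vertex of `K_t` is universal, so any two of them are mutually
maximally distant. If `G` has diameter at most two, passing to the join changes no distance inside
`G`, and the extra neighbours from `K_t` are at distance one, so mutual maximal distance inside `G`
is unchanged. A vertex `i` of `K_t` is never maximally distant from `a ∈ G` as soon as `a` has a
non-neighbour `c ≠ a` in `G`: `c` is a neighbour of `i` at distance two from `a`.

For `G = G^c(L)` both conditions hold: a witness `c` of `a ⊓ c = 0` is itself a zero-divisor, and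
if `a ⊓ b = 0` with atoms `p ≤ a`, `q ≤ b` and a third atom `r`, then `p ⊔ q` is a common
neighbour of `a` and `b`, being a zero-divisor because `r ⊓ (p ⊔ q) = 0` by 0-distributivity.
-/

open SimpleGraph Sum

namespace SimpleGraph

variable {V : Type*} {G : SimpleGraph V} {u v : V}

lemma ediam_le_two_of_commonNeighbors_nonempty
    (h : ∀ u v, u ≠ v → ¬G.Adj u v → (G.commonNeighbors u v).Nonempty) : G.ediam ≤ 2 := by
  refine ediam_le_iff.mpr fun u v => ?_
  by_cases huv : u = v
  · simp [huv]
  by_cases hadj : G.Adj u v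
  · exact (edist_eq_one_iff_adj.mpr hadj).le.trans one_le_two
  · exact (edist_eq_two_iff.mpr ⟨huv, hadj, h u v huv hadj⟩).le

lemma dist_eq_two_of_edist_le_two (h : G.edist u v ≤ 2) (huv : u ≠ v) (hnadj : ¬G.Adj u v) :
    G.dist u v = 2 := by
  have hcommon : (G.commonNeighbors u v).Nonempty := Set.nonempty_iff_ne_empty.mpr fun hempty =>
    (not_lt.mpr h) (two_lt_edist_iff.mpr ⟨huv, hnadj, hempty⟩)
  simp [dist, edist_eq_two_iff.mpr ⟨huv, hnadj, hcommon⟩]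

lemma maxDistant_of_forall_adj (hv : ∀ w, w ≠ v → G.Adj w v) (huv : u ≠ v) :
    MaxDistant G u v := by
  intro w _
  rw [dist_eq_one_iff_adj.mpr (hv u huv)]
  by_cases hwv : w = v
  · simp [hwv]
  · exact (dist_eq_one_iff_adj.mpr (hv w hwv)).le

end SimpleGraph

section JoinKt

variable {V : Type*} {G : SimpleGraph V} {t : ℕ}

lemma joinKt_ediam_le_two (ht : 0 < t) : (joinKt G t).ediam ≤ 2 := by
  refine ediam_le_two_of_commonNeighbors_nonempty ?_
  rintro (a | i) (b | j) hne hadj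
  · exact ⟨inr ⟨0, ht⟩, trivial, trivial⟩
  · exact absurd trivial hadj
  · exact absurd trivial hadj
  · exact absurd (fun hij => hne (congrArg inr hij)) hadj

lemma joinKt_dist_inl_inl (hG : G.ediam ≤ 2) (ht : 0 < t) (a b : V) :
    (joinKt G t).dist (inl a) (inl b) = G.dist a b := by
  by_cases hab : a = b
  · simp [hab]
  by_cases hadj : G.Adj a b
  · have hadj' : (joinKt G t).Adj (inl a) (inl b) := hadj
    rw [dist_eq_one_iff_adj.mpr hadj, dist_eq_one_iff_adj.mpr hadj']
  · have hadj' : ¬(joinKt G t).Adj (inl a) (inl b) := hadj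
    rw [dist_eq_two_of_edist_le_two (edist_le_ediam.trans hG) hab hadj,
      dist_eq_two_of_edist_le_two (edist_le_ediam.trans (joinKt_ediam_le_two ht))
        (inl_injective.ne hab) hadj']

lemma maxDistant_joinKt_inl_inl_iff (hG : G.ediam ≤ 2) (ht : 0 < t) {a b : V} (hab : a ≠ b) :
    MaxDistant (joinKt G t) (inl a) (inl b) ↔ MaxDistant G a b := by
  have hdist := joinKt_dist_inl_inl hG ht
  unfold MaxDistant
  refine ⟨fun h w hw => by simpa only [hdist] using h (inl w) hw, ?_⟩
  rintro h (c | i) hw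
  · simpa only [hdist] using h c hw
  · have hreach : (joinKt G t).Reachable (inl a) (inl b) :=
      (show (joinKt G t).Adj (inl a) (inr i) from trivial).reachable.trans
        (show (joinKt G t).Adj (inr i) (inl b) from trivial).reachable
    calc (joinKt G t).dist (inr i) (inl b) = 1 := dist_eq_one_iff_adj.mpr trivial
      _ ≤ (joinKt G t).dist (inl a) (inl b) := hreach.pos_dist_of_ne (inl_injective.ne hab)

lemma not_maxDistant_joinKt_inr_inl {b : V} (hb : ∃ c, c ≠ b ∧ ¬G.Adj c b) (i : Fin t) :
    ¬MaxDistant (joinKt G t) (inr i) (inl b) := by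
  obtain ⟨c, hcb, hadj⟩ := hb
  have hadj' : ¬(joinKt G t).Adj (inl c) (inl b) := hadj
  have hfar : (joinKt G t).dist (inl c) (inl b) = 2 :=
    dist_eq_two_of_edist_le_two (edist_le_ediam.trans (joinKt_ediam_le_two i.pos))
      (inl_injective.ne hcb) hadj'
  have hnear : (joinKt G t).dist (inr i) (inl b) = 1 := dist_eq_one_iff_adj.mpr trivial
  intro h
  have := h (inl c) trivial
  omega

lemma mutuallyMaxDistant_joinKt_inr_inr {i j : Fin t} (hij : i ≠ j) :
    MutuallyMaxDistant (joinKt G t) (inr i) (inr j) := by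
  have huniv (k : Fin t) : ∀ w, w ≠ inr k → (joinKt G t).Adj w (inr k) := by
    rintro (a | l) hw
    · trivial
    · exact fun hlk => hw (congrArg inr hlk)
  exact ⟨maxDistant_of_forall_adj (huniv j) (inr_injective.ne hij),
    maxDistant_of_forall_adj (huniv i) (inr_injective.ne hij.symm)⟩

lemma mutuallyMaxDistant_joinKt_iff (hG : G.ediam ≤ 2) (hnadj : ∀ b, ∃ c, c ≠ b ∧ ¬G.Adj c b)
    (ht : 0 < t) {u v : V ⊕ Fin t} (huv : u ≠ v) :
    MutuallyMaxDistant (joinKt G t) u v ↔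
      (∃ a b, u = inl a ∧ v = inl b ∧ MutuallyMaxDistant G a b) ∨
        ∃ i j, u = inr i ∧ v = inr j := by
  rcases u with a | i <;> rcases v with b | j
  · have hab : a ≠ b := fun h => huv (congrArg inl h)
    simpa [MutuallyMaxDistant] using and_congr (maxDistant_joinKt_inl_inl_iff hG ht hab)
      (maxDistant_joinKt_inl_inl_iff hG ht hab.symm)
  · simpa using fun h => not_maxDistant_joinKt_inr_inl (hnadj a) j h.2
  · simpa using fun h => not_maxDistant_joinKt_inr_inl (hnadj b) i h.1
  · simpa using mutuallyMaxDistant_joinKt_inr_inr (G := G) fun h => huv (congrArg inr h)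

lemma srGraph_joinKt (hG : G.ediam ≤ 2) (hnadj : ∀ b, ∃ c, c ≠ b ∧ ¬G.Adj c b) (ht : 0 < t) :
    srGraph (joinKt G t) = srSum G t := by
  ext u v
  refine (and_congr_right (mutuallyMaxDistant_joinKt_iff hG hnadj ht)).trans ?_
  rcases u with a | i <;> rcases v with b | j <;> simp [srGraph, srSum]

end JoinKt

lemma exists_ne_ne_of_three {α : Type*} {P : α → Prop}
    (h : ∃ a b c, P a ∧ P b ∧ P c ∧ a ≠ b ∧ a ≠ c ∧ b ≠ c) (p q : α) :
    ∃ r, P r ∧ r ≠ p ∧ r ≠ q := by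
  obtain ⟨a, b, c, ha, hb, hc, hab, hac, hbc⟩ := h
  by_contra! H
  have := or_iff_not_imp_left.mpr (H a ha)
  have := or_iff_not_imp_left.mpr (H b hb)
  have := or_iff_not_imp_left.mpr (H c hc)
  grind

section GcL

variable {L : Type*} [Lattice L] [OrderBot L]

lemma gcL_exists_not_adj (b : ZStar L) : ∃ c : ZStar L, c ≠ b ∧ ¬(GcL L).Adj c b := by
  obtain ⟨hb, c, hc, hbc⟩ := b.2
  refine ⟨⟨c, hc, b.1, hb, by rwa [inf_comm]⟩, fun h => hb ?_, fun h => h.2 (by rwa [inf_comm])⟩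
  simpa [← congrArg Subtype.val h] using hbc

variable [IsAtomic L]

lemma gcL_exists_common_adj (h0dist : ∀ a b c : L, a ⊓ b = ⊥ → a ⊓ c = ⊥ → a ⊓ (b ⊔ c) = ⊥)
    (hatoms : ∃ a b c : L, IsAtom a ∧ IsAtom b ∧ IsAtom c ∧ a ≠ b ∧ a ≠ c ∧ b ≠ c)
    {a b : ZStar L} (hab : a.1 ⊓ b.1 = ⊥) : ∃ z, (GcL L).Adj a z ∧ (GcL L).Adj b z := by
  obtain ⟨p, hp, hpa⟩ := (eq_bot_or_exists_atom_le a.1).resolve_left a.2.1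
  obtain ⟨q, hq, hqb⟩ := (eq_bot_or_exists_atom_le b.1).resolve_left b.2.1
  obtain ⟨r, hr, hrp, hrq⟩ := exists_ne_ne_of_three hatoms p q
  have hr_pq : r ⊓ (p ⊔ q) = ⊥ :=
    h0dist r p q (hr.disjoint_of_ne hp hrp).eq_bot (hr.disjoint_of_ne hq hrq).eq_bot
  have hp_le : p ≤ a.1 ⊓ (p ⊔ q) := le_inf hpa le_sup_left
  have hq_le : q ≤ b.1 ⊓ (p ⊔ q) := le_inf hqb le_sup_right
  let z : ZStar L := ⟨p ⊔ q, ne_bot_of_le_ne_bot hp.1 le_sup_left, r, hr.1, by rwa [inf_comm]⟩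
  refine ⟨z, ⟨fun h => hq.1 ?_, ne_bot_of_le_ne_bot hp.1 hp_le⟩,
    ⟨fun h => hp.1 ?_, ne_bot_of_le_ne_bot hq.1 hq_le⟩⟩
  · rwa [show p ⊔ q = a.1 from congrArg Subtype.val h.symm, inf_comm, hab, le_bot_iff] at hq_le
  · rwa [show p ⊔ q = b.1 from congrArg Subtype.val h.symm, hab, le_bot_iff] at hp_le

lemma gcL_ediam_le_two (h0dist : ∀ a b c : L, a ⊓ b = ⊥ → a ⊓ c = ⊥ → a ⊓ (b ⊔ c) = ⊥)
    (hatoms : ∃ a b c : L, IsAtom a ∧ IsAtom b ∧ IsAtom c ∧ a ≠ b ∧ a ≠ c ∧ b ≠ c) :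
    (GcL L).ediam ≤ 2 :=
  ediam_le_two_of_commonNeighbors_nonempty fun _ _ hab hadj =>
    gcL_exists_common_adj h0dist hatoms (not_not.mp fun h => hadj ⟨hab, h⟩)

end GcL

/-- for an atomic 0-distributive lattice `L` with at least three atoms and
`t ≥ 1`, two distinct vertices of `G^c(L) ∨ K_t` are mutually maximally distant iff
they both lie in `Z*(L)` and are mutually maximally distant in `G^c(L)`, or both lie in
the `K_t` part; equivalently, `(G^c(L) ∨ K_t)_SR = (G^c(L))_SR + K_t`. -/
theorem srGraph_join_complete
    (L : Type*) [Lattice L] [OrderBot L] [IsAtomic L]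
    (h0dist : ∀ a b c : L, a ⊓ b = ⊥ → a ⊓ c = ⊥ → a ⊓ (b ⊔ c) = ⊥)
    (hatoms : ∃ a b c : L, IsAtom a ∧ IsAtom b ∧ IsAtom c ∧ a ≠ b ∧ a ≠ c ∧ b ≠ c)
    (t : ℕ) (ht : 1 ≤ t) :
    (∀ u v : ZStar L ⊕ Fin t, u ≠ v →
      (MutuallyMaxDistant (joinKt (GcL L) t) u v ↔
        ((∃ a b : ZStar L, u = .inl a ∧ v = .inl b ∧ MutuallyMaxDistant (GcL L) a b) ∨
          (∃ i j : Fin t, u = .inr i ∧ v = .inr j)))) ∧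
    srGraph (joinKt (GcL L) t) = srSum (GcL L) t := by
  have hG := gcL_ediam_le_two h0dist hatoms
  exact ⟨fun u v huv => mutuallyMaxDistant_joinKt_iff hG gcL_exists_not_adj ht huv,
    srGraph_joinKt hG gcL_exists_not_adj ht⟩
end

section
/- Let n ≥ 3 and let 2^n be the Boolean lattice of all subsets of an n-element set. Then the strong resolving graph of G^c(2^n) is a connected graph of diameter at most 3. -/
/-- Vertices: nonempty proper subsets of an `n`-element set. -/
def BVert (n : ℕ) : Type :=
  {s : Finset (Fin n) // s ≠ ∅ ∧ s ≠ Finset.univ}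

/-- The complement `G^c(2^n)` of the zero-divisor graph of the Boolean lattice `2^n`. -/
def GcB (n : ℕ) : SimpleGraph (BVert n) where
  Adj s t := s ≠ t ∧ s.1 ∩ t.1 ≠ ∅
  symm := ⟨fun s t h => ⟨h.1.symm, by rw [Finset.inter_comm]; exact h.2⟩⟩
  loopless := ⟨fun s h => h.1 rfl⟩

/-!
For `n ≥ 3` the graph `G^c(2^n)` has diameter 2: two disjoint vertices `u`, `v` both meet
`{x, y}` for any `x ∈ u`, `y ∈ v`, and `{x, y}` is proper. In a graph of diameter 2 every
vertex is maximally distant from every vertex at distance 2, so disjoint vertices are adjacent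
in the strong resolving graph. Any two vertices `u`, `v` are then joined in it by the path
`u, (u ∪ v)ᶜ, v`, or, when `u ∪ v` is everything, by `u, uᶜ, vᶜ, v`.
-/

section StrongResolvingGraph

variable {V : Type*} {G : SimpleGraph V}

theorem srGraph_adj_of_not_adj (hconn : G.Preconnected) (hdiam : ∀ a b, G.dist a b ≤ 2)
    {u v : V} (huv : u ≠ v) (hnadj : ¬ G.Adj u v) : (srGraph G).Adj u v := by
  have hdist : G.dist u v = 2 := by
    have hpos := (hconn u v).pos_dist_of_ne huv
    have hne_one : G.dist u v ≠ 1 := fun h => hnadj (SimpleGraph.dist_eq_one_iff_adj.1 h)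
    have := hdiam u v
    omega
  refine ⟨huv, fun w _ => ?_, fun w _ => ?_⟩
  · exact (hdiam w v).trans hdist.ge
  · exact (hdiam w u).trans (G.dist_comm ▸ hdist.ge)

end StrongResolvingGraph

namespace BVert

variable {n : ℕ}

theorem val_nonempty (u : BVert n) : u.1.Nonempty :=
  Finset.nonempty_iff_ne_empty.2 u.2.1

theorem ne_of_disjoint {u v : BVert n} (h : Disjoint u.1 v.1) : u ≠ v := by
  rintro rfl
  exact u.2.1 (disjoint_self.1 h)

def compl (u : BVert n) : BVert n :=
  ⟨u.1ᶜ, by simpa [Finset.compl_eq_empty_iff] using u.2.2,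
    by simpa [Finset.compl_eq_univ_iff] using u.2.1⟩

def complSup (u v : BVert n) (huv : u.1 ∪ v.1 ≠ Finset.univ) : BVert n :=
  ⟨(u.1 ∪ v.1)ᶜ, by rwa [Ne, Finset.compl_eq_empty_iff],
    by
      rw [Ne, Finset.compl_eq_univ_iff]
      exact (u.val_nonempty.mono Finset.subset_union_left).ne_empty⟩

theorem nonempty_of_two_le (hn : 2 ≤ n) : Nonempty (BVert n) := by
  refine ⟨⟨{⟨0, by omega⟩}, by simp, fun h => ?_⟩⟩
  have := congrArg Finset.card h
  simp only [Finset.card_singleton, Finset.card_univ, Fintype.card_fin] at this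
  omega

end BVert

namespace GcB

variable {n : ℕ}

theorem adj_iff {u v : BVert n} : (GcB n).Adj u v ↔ u ≠ v ∧ ¬ Disjoint u.1 v.1 := by
  simp only [GcB, Finset.disjoint_iff_inter_eq_empty]

theorem exists_walk_length_le_two (hn : 3 ≤ n) (u v : BVert n) :
    ∃ p : (GcB n).Walk u v, p.length ≤ 2 := by
  by_cases huv : u = v
  · subst huv
    exact ⟨.nil, by simp⟩
  by_cases hdisj : Disjoint u.1 v.1
  · obtain ⟨x, hx⟩ := u.val_nonempty
    obtain ⟨y, hy⟩ := v.val_nonempty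
    have hxy_ne_univ : ({x, y} : Finset (Fin n)) ≠ Finset.univ := by
      intro h
      have := (h ▸ Finset.card_le_two : (Finset.univ : Finset (Fin n)).card ≤ 2)
      simp only [Finset.card_univ, Fintype.card_fin] at this
      omega
    let w : BVert n := ⟨{x, y}, by simp, hxy_ne_univ⟩
    have huw : (GcB n).Adj u w := by
      refine adj_iff.2 ⟨fun h => ?_, Finset.not_disjoint_iff.2 ⟨x, hx, by simp [w]⟩⟩
      exact Finset.disjoint_left.1 hdisj.symm hy (by rw [h]; simp [w])
    have hwv : (GcB n).Adj w v := by
      refine adj_iff.2 ⟨fun h => ?_, Finset.not_disjoint_iff.2 ⟨y, by simp [w], hy⟩⟩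
      exact Finset.disjoint_left.1 hdisj hx (by rw [← h]; simp [w])
    exact ⟨huw.toWalk.append hwv.toWalk, by simp⟩
  · exact ⟨(adj_iff.2 ⟨huv, hdisj⟩).toWalk, by simp⟩

theorem preconnected (hn : 3 ≤ n) : (GcB n).Preconnected := fun u v =>
  (exists_walk_length_le_two hn u v).choose.reachable

theorem dist_le_two (hn : 3 ≤ n) (u v : BVert n) : (GcB n).dist u v ≤ 2 :=
  let ⟨p, hp⟩ := exists_walk_length_le_two hn u v
  (SimpleGraph.dist_le p).trans hp

theorem srGraph_adj_of_disjoint (hn : 3 ≤ n) {u v : BVert n} (h : Disjoint u.1 v.1) :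
    (srGraph (GcB n)).Adj u v :=
  srGraph_adj_of_not_adj (preconnected hn) (dist_le_two hn) (BVert.ne_of_disjoint h)
    fun hadj => (adj_iff.1 hadj).2 h

theorem exists_srGraph_walk_length_le_three (hn : 3 ≤ n) (u v : BVert n) :
    ∃ p : (srGraph (GcB n)).Walk u v, p.length ≤ 3 := by
  by_cases hdisj : Disjoint u.1 v.1
  · exact ⟨(srGraph_adj_of_disjoint hn hdisj).toWalk, by simp⟩
  by_cases hcover : u.1 ∪ v.1 = Finset.univ
  · have hcompl : Disjoint u.compl.1 v.compl.1 := Finset.disjoint_iff_inter_eq_empty.2 <| by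
      simp only [BVert.compl, ← Finset.compl_union, hcover, Finset.compl_univ]
    have h₁ := srGraph_adj_of_disjoint hn (u := u) (v := u.compl) disjoint_compl_right
    have h₂ := srGraph_adj_of_disjoint hn hcompl
    have h₃ := srGraph_adj_of_disjoint hn (u := v.compl) (v := v) disjoint_compl_left
    exact ⟨(h₁.toWalk.append h₂.toWalk).append h₃.toWalk, by simp⟩
  · let w := BVert.complSup u v hcover
    have h₁ := srGraph_adj_of_disjoint hn (u := u) (v := w)
      (disjoint_compl_right.mono_right (by simp [w, BVert.complSup]))
    have h₂ := srGraph_adj_of_disjoint hn (u := w) (v := v)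
      (disjoint_compl_left.mono_left (by simp [w, BVert.complSup]))
    exact ⟨h₁.toWalk.append h₂.toWalk, by simp⟩

end GcB

/-- for `n ≥ 3`, the strong resolving graph of `G^c(2^n)` is connected
with diameter at most `3`. -/
theorem srGraph_gc_boolean_connected (n : ℕ) (hn : 3 ≤ n) :
    (srGraph (GcB n)).Connected ∧
    ∀ u v : BVert n, (srGraph (GcB n)).dist u v ≤ 3 := by
  have hwalk := GcB.exists_srGraph_walk_length_le_three hn
  have := BVert.nonempty_of_two_le (n := n) (by omega)
  refine ⟨⟨fun u v => (hwalk u v).choose.reachable⟩, fun u v => ?_⟩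
  obtain ⟨p, hp⟩ := hwalk u v
  exact (SimpleGraph.dist_le p).trans hp
end

section
/- Let n ≥ 2 and let F_1, …, F_n be fields, and set R = F_1 × ⋯ × F_n. Then sdim_M(IG(R)) = 2^n − 2^{n−1} − 1, where IG(R) is the intersection graph of ideals of R. -/
/-- Vertices of the intersection graph of ideals of `R`: the nonzero proper ideals. -/
def IdealVert (R : Type*) [CommRing R] : Type _ :=
  {I : Ideal R // I ≠ ⊥ ∧ I ≠ ⊤}

/-- The intersection graph of ideals of `R`: distinct nonzero proper ideals are
adjacent iff their intersection is nonzero. -/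
def IGraph (R : Type*) [CommRing R] : SimpleGraph (IdealVert R) where
  Adj I J := I ≠ J ∧ I.1 ⊓ J.1 ≠ ⊥
  symm := ⟨fun I J h => ⟨h.1.symm, by rw [inf_comm]; exact h.2⟩⟩
  loopless := ⟨fun I h => h.1 rfl⟩

/-- `w` strongly resolves `u` and `v` in `G`. -/
def StronglyResolves {V : Type*} (G : SimpleGraph V) (w u v : V) : Prop :=
  G.dist u w = G.dist u v + G.dist v w ∨ G.dist v w = G.dist v u + G.dist u w

/-- A strong resolving set for `G`. -/
def IsStrongResolvingSet {V : Type*} (G : SimpleGraph V) (W : Set V) : Prop :=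
  ∀ u v : V, u ≠ v → ∃ w ∈ W, StronglyResolves G w u v

/-- The strong metric dimension of `G`. -/
noncomputable def sdim {V : Type*} (G : SimpleGraph V) : ℕ :=
  sInf {k | ∃ W : Set V, W.Finite ∧ IsStrongResolvingSet G W ∧ Nat.card W = k}

/-!
Since an ideal of `F₁ × ⋯ × Fₙ` is a product of ideals of the fields `Fᵢ`, each of which is `0` or
`Fᵢ`, the graph `IG(R)` is the graph on nonempty proper subsets of `{1, …, n}` in which distinct
subsets are adjacent when they meet. For `n ≥ 3` any two vertices have a common neighbour `{i, j}`
unless adjacent, so the diameter is 2 and is attained by every pair `S, Sᶜ`; hence a strong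
resolving set contains `S` or `Sᶜ` for every `S` (for `n = 2` these are the only vertices) and
has at least `2^(n-1) - 1` elements. Conversely the vertices avoiding a fixed index `i₀` resolve
strongly: two vertices `u ≠ v` through `i₀` are adjacent, and for `i ∈ u \ v` the vertex `vᶜ`
is adjacent to `u` and at distance 2 from `v`.
-/

open SimpleGraph

section StrongMetricDimension

variable {V V' : Type*} {G : SimpleGraph V} {G' : SimpleGraph V'}

theorem SimpleGraph.Hom.edist_map_le (f : G →g G') (u v : V) :
    G'.edist (f u) (f v) ≤ G.edist u v := by
  by_cases hr : G.Reachable u v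
  · obtain ⟨p, hp⟩ := hr.exists_walk_length_eq_edist
    exact hp ▸ (edist_le (p.map f)).trans_eq (by rw [Walk.length_map])
  · exact (edist_eq_top_of_not_reachable hr).symm ▸ le_top

theorem SimpleGraph.Iso.dist_map (e : G ≃g G') (u v : V) : G'.dist (e u) (e v) = G.dist u v := by
  refine congrArg ENat.toNat (le_antisymm (Hom.edist_map_le e.toHom u v) ?_)
  simpa using Hom.edist_map_le e.symm.toHom (e u) (e v)

theorem stronglyResolves_self_left (u v : V) : StronglyResolves G u u v :=
  Or.inr (by rw [dist_self, add_zero])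

theorem stronglyResolves_self_right (u v : V) : StronglyResolves G v u v :=
  Or.inl (by rw [dist_self, add_zero])

theorem StronglyResolves.symm {w u v : V} (h : StronglyResolves G w u v) :
    StronglyResolves G w v u :=
  Or.symm h

theorem StronglyResolves.map (e : G ≃g G') {w u v : V} (h : StronglyResolves G w u v) :
    StronglyResolves G' (e w) (e u) (e v) := by
  simpa only [StronglyResolves, e.dist_map] using h

theorem IsStrongResolvingSet.image (e : G ≃g G') {W : Set V} (hW : IsStrongResolvingSet G W) :
    IsStrongResolvingSet G' (e '' W) := by
  intro u v huv
  obtain ⟨w, hw, h⟩ := hW (e.symm u) (e.symm v) (by simpa using huv)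
  exact ⟨e w, Set.mem_image_of_mem e hw, by simpa using h.map e⟩

theorem sdim_congr (e : G ≃g G') : sdim G = sdim G' := by
  unfold sdim
  congr 1
  ext k
  constructor
  · rintro ⟨W, hfin, hW, rfl⟩
    exact ⟨e '' W, hfin.image e, hW.image e, Nat.card_image_of_injective e.injective W⟩
  · rintro ⟨W, hfin, hW, rfl⟩
    exact ⟨e.symm '' W, hfin.image e.symm, hW.image e.symm,
      Nat.card_image_of_injective e.symm.injective W⟩

theorem sdim_eq_of_isStrongResolvingSet [Finite V] {W : Set V} (hW : IsStrongResolvingSet G W)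
    (hmin : ∀ W' : Set V, IsStrongResolvingSet G W' → Nat.card W ≤ Nat.card W') :
    sdim G = Nat.card W :=
  le_antisymm (Nat.sInf_le ⟨W, W.toFinite, hW, rfl⟩)
    (le_csInf ⟨_, W, W.toFinite, hW, rfl⟩ fun _ ⟨W', _, hW', hk⟩ => hk ▸ hmin W' hW')

theorem StronglyResolves.eq_or_eq_of_forall_dist_le (hG : G.Connected) {w u v : V}
    (hu : ∀ x, G.dist u x ≤ G.dist u v) (hv : ∀ x, G.dist v x ≤ G.dist u v)
    (h : StronglyResolves G w u v) : w = u ∨ w = v := by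
  rcases h with h | h
  · exact Or.inr ((hG.dist_eq_zero_iff.1 (by have := hu w; omega)).symm)
  · rw [dist_comm (u := v) (v := u)] at h
    exact Or.inl ((hG.dist_eq_zero_iff.1 (by have := hv w; omega)).symm)

end StrongMetricDimension

section MeetGraph

abbrev ProperNonzero (L : Type*) [Lattice L] [BoundedOrder L] : Type _ :=
  {a : L // a ≠ ⊥ ∧ a ≠ ⊤}

def meetGraph (L : Type*) [Lattice L] [BoundedOrder L] : SimpleGraph (ProperNonzero L) where
  Adj a b := a ≠ b ∧ a.1 ⊓ b.1 ≠ ⊥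
  symm := ⟨fun a b h => ⟨h.1.symm, by rw [inf_comm]; exact h.2⟩⟩
  loopless := ⟨fun _ h => h.1 rfl⟩

variable {L L' : Type*} [Lattice L] [BoundedOrder L] [Lattice L'] [BoundedOrder L']

theorem meetGraph_adj {a b : ProperNonzero L} :
    (meetGraph L).Adj a b ↔ a ≠ b ∧ a.1 ⊓ b.1 ≠ ⊥ :=
  Iff.rfl

def OrderIso.meetGraphIso (e : L ≃o L') : meetGraph L ≃g meetGraph L' where
  toEquiv := e.toEquiv.subtypeEquiv fun a => by simp
  map_rel_iff' {a b} := by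
    simp only [meetGraph_adj, Equiv.subtypeEquiv_apply, ne_eq, EquivLike.apply_eq_iff_eq,
      Subtype.ext_iff, RelIso.coe_fn_toEquiv, ← e.map_inf, map_eq_bot_iff]

noncomputable def OrderIso.piSimpleOrderSet {ι : Type*} {α : ι → Type*} [∀ i, PartialOrder (α i)]
    [∀ i, BoundedOrder (α i)] [∀ i, IsSimpleOrder (α i)] : (∀ i, α i) ≃o Set ι := by
  classical exact
  { toFun a := {i | a i = ⊤}
    invFun s i := if i ∈ s then ⊤ else ⊥
    left_inv a := funext fun i => by rcases eq_bot_or_eq_top (a i) with h | h <;> simp [h]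
    right_inv s := Set.ext fun i => by by_cases hi : i ∈ s <;> simp [hi]
    map_rel_iff' {a b} := by
      simp only [Equiv.coe_fn_mk, Set.ofPred_subset_ofPred, Pi.le_def]
      refine ⟨fun h i => ?_, fun h i hi => top_le_iff.1 (hi ▸ h i)⟩
      rcases eq_bot_or_eq_top (a i) with hb | ht
      · exact hb ▸ bot_le
      · exact (h i ht).symm ▸ le_top }

noncomputable def idealPiFieldOrderIso {ι : Type*} [Fintype ι] (F : ι → Type*)
    [∀ i, Field (F i)] : Ideal (∀ i, F i) ≃o Finset ι :=
  Ideal.piOrderIso.trans (OrderIso.piSimpleOrderSet.trans Fintype.finsetOrderIsoSet.symm)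

-- `IGraph R` is `meetGraph (Ideal R)` up to unfolding `IdealVert`.
noncomputable def idealPiFieldGraphIso {ι : Type*} [Fintype ι] [DecidableEq ι] (F : ι → Type*)
    [∀ i, Field (F i)] : IGraph (∀ i, F i) ≃g meetGraph (Finset ι) :=
  (idealPiFieldOrderIso F).meetGraphIso

end MeetGraph

namespace ProperNonzero

variable {L : Type*} [BooleanAlgebra L]

instance : Compl (ProperNonzero L) :=
  ⟨fun a => ⟨a.1ᶜ, by simpa using a.2.2, by simpa using a.2.1⟩⟩

@[simp]
theorem coe_compl (a : ProperNonzero L) : (aᶜ).1 = a.1ᶜ :=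
  rfl

theorem compl_injective : Function.Injective (compl : ProperNonzero L → ProperNonzero L) :=
  fun _ _ h => Subtype.ext (_root_.compl_injective (congrArg Subtype.val h))

theorem ne_compl (a : ProperNonzero L) : a ≠ aᶜ := fun h => by
  have : Nontrivial L := ⟨⟨a.1, ⊥, a.2.1⟩⟩
  exact ne_compl_self (congrArg Subtype.val h)

section Finset

variable {α : Type*} [Fintype α] [DecidableEq α]

theorem eq_or_eq_compl_of_card_eq_two (h2 : Fintype.card α = 2) (S T : ProperNonzero (Finset α)) :
    T = S ∨ T = Sᶜ := by
  have hcard (U : ProperNonzero (Finset α)) : U.1.card = 1 := by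
    have h0 : 0 < U.1.card := Finset.card_pos.2 (Finset.nonempty_iff_ne_empty.2 U.2.1)
    have h1 : U.1.card < Fintype.card α := by
      simpa using Finset.card_lt_card (Finset.ssubset_univ_iff.2 U.2.2)
    omega
  obtain ⟨a, ha⟩ := Finset.card_eq_one.1 (hcard S)
  by_cases haT : a ∈ T.1
  · refine Or.inl (Subtype.ext (Finset.eq_of_subset_of_card_le ?_ (by rw [hcard, hcard])).symm)
    simpa [ha] using haT
  · refine Or.inr (Subtype.ext (Finset.eq_of_subset_of_card_le ?_ (by rw [hcard, hcard])))
    intro x hx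
    simpa [ha] using fun hxa : x = a => haT (hxa ▸ hx)

def avoiding (i : α) : Set (ProperNonzero (Finset α)) :=
  {S | i ∉ S.1}

theorem ne_compl_of_mem_avoiding {i : α} {S T : ProperNonzero (Finset α)} (hS : S ∈ avoiding i)
    (hT : T ∈ avoiding i) : S ≠ Tᶜ := fun h => by
  rw [h] at hS
  simp_all [avoiding]

theorem card_avoiding (i₀ : α) :
    Nat.card (avoiding i₀) = 2 ^ (Fintype.card α - 1) - 1 := by
  have e : avoiding i₀ ≃ ((Finset.univ.erase i₀).powerset.erase ∅ : Finset (Finset α)) :=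
    (Equiv.subtypeSubtypeEquivSubtypeInter _ (fun S : Finset α => i₀ ∉ S)).trans
      (Equiv.subtypeEquivRight fun S => by
        simp only [Finset.mem_erase, Finset.mem_powerset, Finset.subset_erase, Finset.subset_univ,
          Finset.bot_eq_empty, Finset.top_eq_univ, true_and]
        exact ⟨fun h => ⟨h.1.1, h.2⟩,
          fun h => ⟨⟨h.1, fun hS => h.2 (hS ▸ Finset.mem_univ i₀)⟩, h.2⟩⟩)
  rw [Nat.card_congr e, Nat.card_eq_fintype_card, Fintype.card_coe,
    Finset.card_erase_of_mem (Finset.empty_mem_powerset _), Finset.card_powerset,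
    Finset.card_erase_of_mem (Finset.mem_univ i₀), Finset.card_univ]

end Finset

end ProperNonzero

namespace meetGraph

theorem not_adj_compl {L : Type*} [BooleanAlgebra L] (a : ProperNonzero L) :
    ¬(meetGraph L).Adj a aᶜ :=
  fun h => h.2 inf_compl_eq_bot

open ProperNonzero

variable {α : Type*} [Fintype α] [DecidableEq α]

theorem adj_of_mem {S T : ProperNonzero (Finset α)} {i : α} (hST : S ≠ T) (hS : i ∈ S.1)
    (hT : i ∈ T.1) : (meetGraph (Finset α)).Adj S T :=
  ⟨hST, Finset.ne_empty_of_mem (Finset.mem_inter.2 ⟨hS, hT⟩)⟩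

theorem exists_adj_adj_of_not_adj (h3 : 3 ≤ Fintype.card α) {S T : ProperNonzero (Finset α)}
    (hST : S ≠ T) (h : ¬(meetGraph (Finset α)).Adj S T) :
    ∃ U, (meetGraph (Finset α)).Adj S U ∧ (meetGraph (Finset α)).Adj U T := by
  obtain ⟨i, hi⟩ := Finset.nonempty_iff_ne_empty.2 S.2.1
  obtain ⟨j, hj⟩ := Finset.nonempty_iff_ne_empty.2 T.2.1
  have hiT : i ∉ T.1 := fun hiT => h (adj_of_mem hST hi hiT)
  have hjS : j ∉ S.1 := fun hjS => h (adj_of_mem hST hjS hj)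
  have hpair : ({i, j} : Finset α) ≠ ⊤ := fun htop => by
    have := Finset.card_le_two (a := i) (b := j)
    rw [htop, Finset.top_eq_univ, Finset.card_univ] at this
    omega
  let U : ProperNonzero (Finset α) := ⟨{i, j}, Finset.insert_ne_empty _ _, hpair⟩
  refine ⟨U, adj_of_mem (T := U) ?_ hi (by simp [U]), adj_of_mem (S := U) ?_ (by simp [U]) hj⟩
  · exact fun hSU => hjS (hSU ▸ by simp [U])
  · exact fun hUT => hiT (hUT ▸ by simp [U])

theorem exists_walk_length_le_two (h3 : 3 ≤ Fintype.card α) (S T : ProperNonzero (Finset α)) :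
    ∃ p : (meetGraph (Finset α)).Walk S T, p.length ≤ 2 := by
  by_cases hST : S = T
  · exact hST ▸ ⟨.nil, by simp⟩
  by_cases hadj : (meetGraph (Finset α)).Adj S T
  · exact ⟨hadj.toWalk, by simp⟩
  obtain ⟨U, hSU, hUT⟩ := exists_adj_adj_of_not_adj h3 hST hadj
  exact ⟨.cons hSU (.cons hUT .nil), by simp⟩

theorem connected (h3 : 3 ≤ Fintype.card α) : (meetGraph (Finset α)).Connected := by
  obtain ⟨i⟩ : Nonempty α := Fintype.card_pos_iff.1 (by omega)
  have hi : ({i} : Finset α) ≠ ⊤ := fun htop => by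
    have := congrArg Finset.card htop
    rw [Finset.card_singleton, Finset.top_eq_univ, Finset.card_univ] at this
    omega
  have : Nonempty (ProperNonzero (Finset α)) := ⟨⟨{i}, Finset.singleton_ne_empty i, hi⟩⟩
  exact ⟨fun S T => by
    obtain ⟨p, -⟩ := exists_walk_length_le_two h3 S T
    exact p.reachable⟩

theorem dist_le_two (h3 : 3 ≤ Fintype.card α) (S T : ProperNonzero (Finset α)) :
    (meetGraph (Finset α)).dist S T ≤ 2 :=
  let ⟨p, hp⟩ := exists_walk_length_le_two h3 S T
  (dist_le p).trans hp

theorem dist_compl (h3 : 3 ≤ Fintype.card α) (S : ProperNonzero (Finset α)) :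
    (meetGraph (Finset α)).dist S Sᶜ = 2 :=
  le_antisymm (dist_le_two h3 S Sᶜ)
    ((connected h3).one_lt_dist_of_ne_of_not_adj S.ne_compl (not_adj_compl S))

theorem mem_or_compl_mem_of_isStrongResolvingSet (h2 : 2 ≤ Fintype.card α)
    {W : Set (ProperNonzero (Finset α))} (hW : IsStrongResolvingSet (meetGraph (Finset α)) W)
    (S : ProperNonzero (Finset α)) : S ∈ W ∨ Sᶜ ∈ W := by
  obtain ⟨w, hw, hres⟩ := hW S Sᶜ S.ne_compl
  suffices w = S ∨ w = Sᶜ by rcases this with rfl | rfl <;> simp [hw]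
  rcases h2.eq_or_lt with h2 | h3
  · exact eq_or_eq_compl_of_card_eq_two h2.symm S w
  · have hdiam (x y : ProperNonzero (Finset α)) : (meetGraph (Finset α)).dist x y ≤
        (meetGraph (Finset α)).dist S Sᶜ :=
      (dist_compl h3 S).symm ▸ dist_le_two h3 x y
    exact hres.eq_or_eq_of_forall_dist_le (connected h3) (hdiam S) (hdiam Sᶜ)

theorem stronglyResolves_compl {i₀ i : α} {u v : ProperNonzero (Finset α)} (hu₀ : i₀ ∈ u.1)
    (hv₀ : i₀ ∈ v.1) (hu : i ∈ u.1) (hv : i ∉ v.1) :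
    StronglyResolves (meetGraph (Finset α)) vᶜ u v := by
  have hi : i ≠ i₀ := fun h => hv (h ▸ hv₀)
  have h3 : 3 ≤ Fintype.card α := by
    have hpair : ({i₀, i} : Finset α).card = 2 := Finset.card_pair hi.symm
    have hsub : ({i₀, i} : Finset α) ⊆ u.1 := Finset.insert_subset hu₀ (by simpa using hu)
    have hlt : u.1.card < Fintype.card α := by
      simpa using Finset.card_lt_card (Finset.ssubset_univ_iff.2 u.2.2)
    have := Finset.card_le_card hsub
    omega
  have hvu : (meetGraph (Finset α)).Adj v u :=
    adj_of_mem (fun h => hv (h ▸ hu)) hv₀ hu₀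
  have huv : (meetGraph (Finset α)).Adj u vᶜ :=
    adj_of_mem (fun h => by rw [h] at hu₀; simp [hv₀] at hu₀) hu (by simpa using hv)
  right
  rw [dist_compl h3, dist_eq_one_iff_adj.2 hvu, dist_eq_one_iff_adj.2 huv]

theorem isStrongResolvingSet_avoiding (i₀ : α) :
    IsStrongResolvingSet (meetGraph (Finset α)) (avoiding i₀) := by
  intro u v huv
  by_cases hu₀ : i₀ ∈ u.1
  swap
  · exact ⟨u, hu₀, stronglyResolves_self_left u v⟩
  by_cases hv₀ : i₀ ∈ v.1
  swap
  · exact ⟨v, hv₀, stronglyResolves_self_right u v⟩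
  by_cases hvu : v.1 ⊆ u.1
  · obtain ⟨i, hu, hv⟩ := Finset.not_subset.1 fun huv' => huv (Subtype.ext (huv'.antisymm hvu))
    exact ⟨vᶜ, by simpa [avoiding] using hv₀, stronglyResolves_compl hu₀ hv₀ hu hv⟩
  · obtain ⟨i, hv, hu⟩ := Finset.not_subset.1 hvu
    exact ⟨uᶜ, by simpa [avoiding] using hu₀, (stronglyResolves_compl hv₀ hu₀ hv hu).symm⟩

theorem card_avoiding_le (h2 : 2 ≤ Fintype.card α) (i₀ : α) {W : Set (ProperNonzero (Finset α))}
    (hW : IsStrongResolvingSet (meetGraph (Finset α)) W) :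
    Nat.card (avoiding i₀) ≤ Nat.card W := by
  classical
  let f (S : avoiding i₀) : W :=
    if hS : S.1 ∈ W then ⟨S, hS⟩
    else ⟨S.1ᶜ, (mem_or_compl_mem_of_isStrongResolvingSet h2 hW S).resolve_left hS⟩
  refine Nat.card_le_card_of_injective f fun S T hST => ?_
  simp only [f] at hST
  split_ifs at hST <;> simp only [Subtype.mk.injEq] at hST
  · exact Subtype.ext hST
  · exact absurd hST (ne_compl_of_mem_avoiding S.2 T.2)
  · exact absurd hST.symm (ne_compl_of_mem_avoiding T.2 S.2)
  · exact Subtype.ext (ProperNonzero.compl_injective hST)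

theorem sdim_finset (h2 : 2 ≤ Fintype.card α) :
    sdim (meetGraph (Finset α)) = 2 ^ (Fintype.card α - 1) - 1 := by
  obtain ⟨i₀⟩ : Nonempty α := Fintype.card_pos_iff.1 (by omega)
  rw [← card_avoiding i₀]
  exact sdim_eq_of_isStrongResolvingSet (isStrongResolvingSet_avoiding i₀)
    fun _ hW => card_avoiding_le h2 i₀ hW

end meetGraph

/-- for a product `R = F₁ × ⋯ × Fₙ` of fields with `n ≥ 2`,
`sdim_M(IG(R)) = 2^n - 2^(n-1) - 1`. -/
theorem sdim_intersection_graph_product_of_fields (n : ℕ) (hn : 2 ≤ n)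
    (F : Fin n → Type*) [∀ i, Field (F i)] :
    sdim (IGraph (∀ i, F i)) = 2 ^ n - 2 ^ (n - 1) - 1 := by
  rw [sdim_congr (idealPiFieldGraphIso F), meetGraph.sdim_finset (by simpa using hn),
    Fintype.card_fin]
  have hpow : 2 ^ n = 2 * 2 ^ (n - 1) := by rw [← pow_succ']; congr; omega
  omega
end
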